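/- arXiv:math-ph/0111044 — 2 statements merged into one kernel-verified Lean document; each statement's English description precedes it below -/
import Mathlib

section
/- Let d = 3 and define t_rel(ξ, P) = √(|μ₊P − ξ|² + m₊²) + √(|μ₋P + ξ|² + m₋²) − √(p² + M²), where M = m₊ + m₋ > 0, μ± = m±/M, P = (p,0,0), ξ = (η, ζ) ∈ ℝ × ℝ². If p ≥ ν ≥ M and either |η| ≥ 3p or |ζ|² ≥ νp, then t_rel(ξ, P) ≥ ν/(2√3). -/
/-!
The two energies are Euclidean norms of `(μ₊p − η, ‖ζ‖, m₊)` and `(μ₋p + η, ‖ζ‖, m₋)` in `ℝ³`, so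
Minkowski's inequality bounds their sum below by `√(p² + 3νp + M²)` in either case: if
`‖ζ‖² ≥ νp`, add the vectors as they are (the first coordinates sum to `p`); if `|η| ≥ 3p`, drop `ζ`
and replace the first coordinates by their absolute values, whose sum is at least `2|η| − p ≥ 2p`.
Since `√(p² + M²) ≤ 3p/2`, squaring shows that this exceeds `√(p² + M²)` by at least
`ν/3 ≥ ν/(2√3)`.
-/

open Real

lemma sqrt_sq_add_sq_add_sq_add_le (x y a b c d : ℝ) :
    √((x + y) ^ 2 + (a + b) ^ 2 + (c + d) ^ 2) ≤
      √(x ^ 2 + a ^ 2 + c ^ 2) + √(y ^ 2 + b ^ 2 + d ^ 2) := by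
  simpa [EuclideanSpace.norm_eq, Fin.sum_univ_three, ← add_assoc] using
    norm_add_le !₂[x, a, c] !₂[y, b, d]

lemma two_mul_abs_sub_le_abs_sub_add_abs_add {μp μm p : ℝ} (hμ : μp + μm = 1)
    (hμp : 0 ≤ μp) (hμm : 0 ≤ μm) (hp : 0 ≤ p) (η : ℝ) :
    2 * |η| - p ≤ |μp * p - η| + |μm * p + η| := by
  have h1 : |η| - μp * p ≤ |μp * p - η| := by
    simpa [abs_sub_comm, abs_of_nonneg (mul_nonneg hμp hp)] using abs_sub_abs_le_abs_sub η (μp * p)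
  have h2 : |η| - μm * p ≤ |μm * p + η| := by
    simpa [add_comm, abs_of_nonneg (mul_nonneg hμm hp)] using abs_sub_abs_le_abs_sub η (-(μm * p))
  have hp' : μp * p + μm * p = p := by rw [← add_mul, hμ, one_mul]
  linarith

lemma div_three_add_sqrt_le_sqrt {M ν p : ℝ} (hM : 0 ≤ M) (hMp : M ≤ p) (hν : 0 ≤ ν) (hνp : ν ≤ p) :
    ν / 3 + √(p ^ 2 + M ^ 2) ≤ √(p ^ 2 + 3 * ν * p + M ^ 2) := by
  have hB := sq_sqrt (show 0 ≤ p ^ 2 + M ^ 2 by positivity)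
  have hBp : √(p ^ 2 + M ^ 2) ≤ 3 / 2 * p := sqrt_le_iff.mpr ⟨by linarith, by nlinarith⟩
  rw [le_sqrt (by positivity) (by nlinarith)]
  nlinarith [sqrt_nonneg (p ^ 2 + M ^ 2)]

lemma div_two_mul_sqrt_three_le_div_three (ν : ℝ) (hν : 0 ≤ ν) : ν / (2 * √3) ≤ ν / 3 := by
  apply div_le_div_of_nonneg_left hν (by norm_num)
  nlinarith [sq_sqrt (show (0:ℝ) ≤ 3 by norm_num), sqrt_nonneg 3]

theorem stmt_6 (mp mm M μp μm p ν η : ℝ) (ζ : EuclideanSpace ℝ (Fin 2))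
    (hmp : 0 < mp) (hmm : 0 < mm) (hM : M = mp + mm)
    (hμp : μp = mp / M) (hμm : μm = mm / M)
    (hνM : M ≤ ν) (hpν : ν ≤ p)
    (hcase : 3 * p ≤ |η| ∨ ν * p ≤ ‖ζ‖ ^ 2) :
    ν / (2 * Real.sqrt 3) ≤
      Real.sqrt ((μp * p - η) ^ 2 + ‖ζ‖ ^ 2 + mp ^ 2)
        + Real.sqrt ((μm * p + η) ^ 2 + ‖ζ‖ ^ 2 + mm ^ 2)
        - Real.sqrt (p ^ 2 + M ^ 2) := by
  have hM0 : 0 < M := by linarith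
  have hν : 0 ≤ ν := by linarith
  have hp : 0 ≤ p := by linarith
  have hμ : μp + μm = 1 := by rw [hμp, hμm, ← add_div, ← hM, div_self hM0.ne']
  have hμp0 : 0 ≤ μp := by rw [hμp]; positivity
  have hμm0 : 0 ≤ μm := by rw [hμm]; positivity
  have hlower : √(p ^ 2 + 3 * ν * p + M ^ 2) ≤
      √((μp * p - η) ^ 2 + ‖ζ‖ ^ 2 + mp ^ 2) + √((μm * p + η) ^ 2 + ‖ζ‖ ^ 2 + mm ^ 2) := by
    rcases hcase with hη | hζ
    · have hsum := two_mul_abs_sub_le_abs_sub_add_abs_add hμ hμp0 hμm0 hp η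
      calc √(p ^ 2 + 3 * ν * p + M ^ 2)
          ≤ √((|μp * p - η| + |μm * p + η|) ^ 2 + (0 + 0) ^ 2 + (mp + mm) ^ 2) :=
            sqrt_le_sqrt (by nlinarith)
        _ ≤ √(|μp * p - η| ^ 2 + 0 ^ 2 + mp ^ 2) + √(|μm * p + η| ^ 2 + 0 ^ 2 + mm ^ 2) :=
            sqrt_sq_add_sq_add_sq_add_le ..
        _ ≤ _ := by
            gcongr ?_ + ?_ <;> apply sqrt_le_sqrt <;> simp only [sq_abs] <;>
              linarith [sq_nonneg ‖ζ‖]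
    · have hx : μp * p - η + (μm * p + η) = p := by linear_combination p * hμ
      calc √(p ^ 2 + 3 * ν * p + M ^ 2)
          ≤ √((μp * p - η + (μm * p + η)) ^ 2 + (‖ζ‖ + ‖ζ‖) ^ 2 + (mp + mm) ^ 2) :=
            sqrt_le_sqrt (by rw [hx, ← hM]; nlinarith)
        _ ≤ _ := sqrt_sq_add_sq_add_sq_add_le ..
  linarith [div_three_add_sqrt_le_sqrt hM0.le (hνM.trans hpν) hν hpν,
    div_two_mul_sqrt_three_le_div_three ν hν]
end

section
/- For all p ≥ M > 0 and 0 < δ < 1/2, with μ₊, μ₋ > 0, μ₊+μ₋ = 1, τ = M/p, define H_p(η, ζ) = √((η−μ₊)² + |ζ|² + μ₊²τ²) + √((η+μ₋)² + |ζ|² + μ₋²τ²) − √(1+τ²) on ℝ × ℝ^{d-1}. Then H_p(μ₊/(1−δ), 0) − H_p(μ₊, 0) ≥ C(μ₊, μ₋) δ for a positive constant C depending only on μ₊ and μ₋. -/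
/-!
The two `√(1 + τ²)` terms cancel, and the first square root can only grow when `η` moves away
from `μ₊`, so everything rests on the second one, `η ↦ √((η + μ₋)² + μ₋²τ²)`. By Cauchy–Schwarz,
`√(x² + c) · √(y² + c) ≥ x y + c`, which gives the mean-value type bound
`√(y² + c) - √(x² + c) ≥ x (y - x) / √(x² + c)`. At `x = μ₊ + μ₋ = 1` the denominator is at most
`√(1 + μ₋²)` because `τ ≤ 1`, and the increment `y - x = μ₊ δ / (1 - δ)` is at least `μ₊ δ`.
-/

namespace Real

theorem mul_add_le_sqrt_sq_add_mul_sqrt_sq_add {c : ℝ} (hc : 0 ≤ c) (x y : ℝ) :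
    x * y + c ≤ √(x ^ 2 + c) * √(y ^ 2 + c) := by
  rw [← sqrt_mul (by positivity)]
  refine (le_abs_self _).trans (abs_le_sqrt ?_)
  nlinarith [sq_nonneg (x - y), hc]

theorem mul_sub_le_sqrt_sq_add_mul_sub {c : ℝ} (hc : 0 ≤ c) (x y : ℝ) :
    x * (y - x) ≤ √(x ^ 2 + c) * (√(y ^ 2 + c) - √(x ^ 2 + c)) := by
  have hx : √(x ^ 2 + c) * √(x ^ 2 + c) = x ^ 2 + c := mul_self_sqrt (by positivity)
  nlinarith [mul_add_le_sqrt_sq_add_mul_sqrt_sq_add hc x y]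

end Real

theorem mul_le_div_one_sub_sub {a δ : ℝ} (ha : 0 ≤ a) (hδ : 0 ≤ δ) (hδ1 : δ < 1) :
    a * δ ≤ a / (1 - δ) - a := by
  have h : 0 < 1 - δ := sub_pos.mpr hδ1
  rw [div_sub' h.ne', le_div_iff₀ h]
  nlinarith [mul_nonneg ha (mul_nonneg hδ hδ)]

theorem stmt_19_general (μp μm : ℝ) (hμp : 0 < μp) (hμ : μp + μm = 1) :
    ∃ C : ℝ, 0 < C ∧ ∀ p M δ : ℝ, 0 < M → M ≤ p → 0 < δ → δ < 1 / 2 →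
      C * δ ≤
        (Real.sqrt ((μp / (1 - δ) - μp) ^ 2 + μp ^ 2 * (M / p) ^ 2)
            + Real.sqrt ((μp / (1 - δ) + μm) ^ 2 + μm ^ 2 * (M / p) ^ 2)
            - Real.sqrt (1 + (M / p) ^ 2))
          - (Real.sqrt ((μp - μp) ^ 2 + μp ^ 2 * (M / p) ^ 2)
            + Real.sqrt ((μp + μm) ^ 2 + μm ^ 2 * (M / p) ^ 2)
            - Real.sqrt (1 + (M / p) ^ 2)) := by
  refine ⟨μp / √(1 + μm ^ 2), by positivity, fun p M δ hM hMp hδ hδ2 => ?_⟩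
  set τ := M / p
  have hp : 0 < p := hM.trans_le hMp
  have hτ : τ ^ 2 ≤ 1 := pow_le_one₀ (div_pos hM hp).le ((div_le_one hp).mpr hMp)
  have hA : √((μp - μp) ^ 2 + μp ^ 2 * τ ^ 2) ≤ √((μp / (1 - δ) - μp) ^ 2 + μp ^ 2 * τ ^ 2) :=
    Real.sqrt_le_sqrt (by
      rw [sub_self, zero_pow two_ne_zero, zero_add]; exact le_add_of_nonneg_left (sq_nonneg _))
  have hgap : μp * δ ≤ (μp / (1 - δ) + μm) - (μp + μm) := by
    linarith [mul_le_div_one_sub_sub hμp.le hδ.le (by linarith)]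
  have hincr := Real.mul_sub_le_sqrt_sq_add_mul_sub (c := μm ^ 2 * τ ^ 2) (by positivity)
    (μp + μm) (μp / (1 - δ) + μm)
  rw [hμ, one_pow, one_mul] at hincr
  have hden : √(1 + μm ^ 2 * τ ^ 2) ≤ √(1 + μm ^ 2) :=
    Real.sqrt_le_sqrt (by nlinarith [sq_nonneg μm])
  have hB : μp * δ / √(1 + μm ^ 2) ≤
      √((μp / (1 - δ) + μm) ^ 2 + μm ^ 2 * τ ^ 2) - √(1 + μm ^ 2 * τ ^ 2) := calc
    μp * δ / √(1 + μm ^ 2) ≤ (μp / (1 - δ) + μm - 1) / √(1 + μm ^ 2 * τ ^ 2) :=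
      div_le_div₀ (by linarith [mul_pos hμp hδ]) (by linarith) (by positivity) hden
    _ ≤ _ := (div_le_iff₀' (by positivity)).mpr hincr
  rw [hμ, one_pow, div_mul_eq_mul_div]
  linarith

theorem stmt_19 (μp μm : ℝ) (hμp : 0 < μp) (hμm : 0 < μm) (hμ : μp + μm = 1) :
    ∃ C : ℝ, 0 < C ∧ ∀ p M δ : ℝ, 0 < M → M ≤ p → 0 < δ → δ < 1 / 2 →
      C * δ ≤
        (Real.sqrt ((μp / (1 - δ) - μp) ^ 2 + μp ^ 2 * (M / p) ^ 2)
            + Real.sqrt ((μp / (1 - δ) + μm) ^ 2 + μm ^ 2 * (M / p) ^ 2)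
            - Real.sqrt (1 + (M / p) ^ 2))
          - (Real.sqrt ((μp - μp) ^ 2 + μp ^ 2 * (M / p) ^ 2)
            + Real.sqrt ((μp + μm) ^ 2 + μm ^ 2 * (M / p) ^ 2)
            - Real.sqrt (1 + (M / p) ^ 2)) :=
  stmt_19_general μp μm hμp hμ
end
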